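/- arXiv:2302.06701 — 4 statements merged into one kernel-verified Lean document; each statement's English description precedes it below -/
import Mathlib

section
/- Let $g: \mathbb{R}^d \to \mathbb{R}$ be $L$-smooth and $\mu$-strongly convex with minimizer $y^*$. Let $w$ be a random vector and suppose $y_{t+1} = y_t - \gamma \alpha w$ with $\gamma < 1/(2L)$ and $0 < \alpha < 1$. Then $\mathbb{E}\|y_{t+1} - y^*\|^2 \le (1 - \tfrac{\mu\gamma\alpha}{2})\|y_t - y^*\|^2 - \tfrac{\gamma^2\alpha}{4}\|\mathbb{E}[w]\|^2 + \tfrac{4\gamma\alpha}{\mu}\|\nabla g(y_t) - \mathbb{E}[w]\|^2 + \tfrac{3\gamma^2\alpha}{2}\mathrm{Var}[w]$. -/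
/-!
Expanding the square around the mean of `w` splits `𝔼‖y_t - γα w - y*‖²` into the deterministic
term `‖y_t - γα 𝔼[w] - y*‖²` and `(γα)² Var[w]`. For the deterministic term one writes
`𝔼[w] = ∇g(y_t) - (∇g(y_t) - 𝔼[w])`: the gradient part is controlled by strong convexity together
with the smoothness bound `‖∇g(y)‖² ≤ 2L (g(y) - g(y*))`, which gives
`μ‖y - y*‖² + ‖∇g(y)‖²/L ≤ 2⟪y - y*, ∇g(y)⟫`, and the bias part by Young's inequality. The step size enters through `γμ ≤ γL < 1/2`; the
comparison `μ ≤ L` fails only on the zero space, where every term vanishes.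
-/

open MeasureTheory Set
open scoped InnerProductSpace

section

variable {E : Type*} [NormedAddCommGroup E] [InnerProductSpace ℝ E] {g : E → ℝ} {G : E → E}
  {L μ : ℝ}

theorem hasDerivAt_comp_add_smul_of_hasGradientAt [CompleteSpace E]
    (hgrad : ∀ y, HasGradientAt g (G y) y) (y v : E) (s : ℝ) :
    HasDerivAt (fun s : ℝ => g (y + s • v)) ⟪G (y + s • v), v⟫_ℝ s := by
  have hline : HasDerivAt (fun s : ℝ => y + s • v) v s := by
    simpa using ((hasDerivAt_id s).smul_const v).const_add y
  have := (hgrad (y + s • v)).hasFDerivAt.comp_hasDerivAt s hline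
  simp only [InnerProductSpace.toDual_apply_apply] at this
  exact this

theorem le_add_inner_add_sq_of_lipschitz_gradient [CompleteSpace E]
    (hgrad : ∀ y, HasGradientAt g (G y) y) (hsm : ∀ y1 y2, ‖G y1 - G y2‖ ≤ L * ‖y1 - y2‖)
    (y v : E) :
    g (y + v) ≤ g y + ⟪G y, v⟫_ℝ + L / 2 * ‖v‖ ^ 2 := by
  have hφ := hasDerivAt_comp_add_smul_of_hasGradientAt hgrad y v
  have hB : ∀ s : ℝ, HasDerivAt (fun s => g y + s * ⟪G y, v⟫_ℝ + L / 2 * s ^ 2 * ‖v‖ ^ 2)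
      (⟪G y, v⟫_ℝ + L * s * ‖v‖ ^ 2) s := fun s =>
    ((((hasDerivAt_id s).mul_const ⟪G y, v⟫_ℝ).const_add (g y)).add
      (((hasDerivAt_pow 2 s).const_mul (L / 2)).mul_const (‖v‖ ^ 2))).congr_deriv
        (by rw [Nat.cast_ofNat, Nat.add_one_sub_one, pow_one]; ring)
  have hderiv_le : ∀ s ∈ Ico (0 : ℝ) 1,
      ⟪G (y + s • v), v⟫_ℝ ≤ ⟪G y, v⟫_ℝ + L * s * ‖v‖ ^ 2 := by
    rintro s ⟨hs, -⟩
    have hlip : ‖G (y + s • v) - G y‖ ≤ L * (s * ‖v‖) := by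
      simpa [norm_smul, abs_of_nonneg hs] using hsm (y + s • v) y
    have := real_inner_le_norm (G (y + s • v) - G y) v
    rw [inner_sub_left] at this
    nlinarith [norm_nonneg v]
  simpa using image_le_of_deriv_right_le_deriv_boundary (a := 0) (b := 1)
    (fun s _ => (hφ s).continuousAt.continuousWithinAt) (fun s _ => (hφ s).hasDerivWithinAt)
    (by simp) (fun s _ => (hB s).continuousAt.continuousWithinAt)
    (fun s _ => (hB s).hasDerivWithinAt) hderiv_le (right_mem_Icc.2 zero_le_one)

theorem sq_norm_gradient_div_le_sub_of_isMin [CompleteSpace E] (hL : 0 < L)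
    (hgrad : ∀ y, HasGradientAt g (G y) y) (hsm : ∀ y1 y2, ‖G y1 - G y2‖ ≤ L * ‖y1 - y2‖)
    {ystar : E} (hmin : ∀ y, g ystar ≤ g y) (y : E) :
    ‖G y‖ ^ 2 / (2 * L) ≤ g y - g ystar := by
  have hstep := le_add_inner_add_sq_of_lipschitz_gradient hgrad hsm y (-L⁻¹ • G y)
  rw [inner_smul_right, real_inner_self_eq_norm_sq, norm_smul, mul_pow, Real.norm_eq_abs,
    sq_abs] at hstep
  have hdecrease : g (y + -L⁻¹ • G y) ≤ g y - ‖G y‖ ^ 2 / (2 * L) := by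
    convert hstep using 1
    field_simp
    ring
  linarith [hmin (y + -L⁻¹ • G y)]

theorem mul_sq_add_sq_div_le_two_inner_of_isMin [CompleteSpace E] (hL : 0 < L)
    (hgrad : ∀ y, HasGradientAt g (G y) y)
    (hsc : ∀ y1 y2, g y2 + ⟪G y2, y1 - y2⟫_ℝ + μ / 2 * ‖y1 - y2‖ ^ 2 ≤ g y1)
    (hsm : ∀ y1 y2, ‖G y1 - G y2‖ ≤ L * ‖y1 - y2‖)
    {ystar : E} (hmin : ∀ y, g ystar ≤ g y) (y : E) :
    μ * ‖y - ystar‖ ^ 2 + ‖G y‖ ^ 2 / L ≤ 2 * ⟪y - ystar, G y⟫_ℝ := by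
  have hgap := sq_norm_gradient_div_le_sub_of_isMin hL hgrad hsm hmin y
  have hconv := hsc ystar y
  rw [← neg_sub y ystar, inner_neg_right, norm_neg, real_inner_comm] at hconv
  have hhalf : ‖G y‖ ^ 2 / L = 2 * (‖G y‖ ^ 2 / (2 * L)) := by field_simp
  linarith

theorem le_of_strongConvex_of_lipschitz_gradient [Nontrivial E]
    (hsc : ∀ y1 y2, g y2 + ⟪G y2, y1 - y2⟫_ℝ + μ / 2 * ‖y1 - y2‖ ^ 2 ≤ g y1)
    (hsm : ∀ y1 y2, ‖G y1 - G y2‖ ≤ L * ‖y1 - y2‖) : μ ≤ L := by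
  obtain ⟨u, hu⟩ := exists_ne (0 : E)
  have hmono : μ * ‖u‖ ^ 2 ≤ ⟪G u - G 0, u⟫_ℝ := by
    have h1 := hsc u 0
    have h2 := hsc 0 u
    simp only [sub_zero, zero_sub, inner_neg_right, norm_neg] at h1 h2
    rw [inner_sub_left]
    linarith
  have hlip : ⟪G u - G 0, u⟫_ℝ ≤ L * ‖u‖ ^ 2 :=
    calc ⟪G u - G 0, u⟫_ℝ ≤ ‖G u - G 0‖ * ‖u‖ := real_inner_le_norm _ _
      _ ≤ L * ‖u - 0‖ * ‖u‖ := by gcongr; exact hsm u 0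
      _ = L * ‖u‖ ^ 2 := by rw [sub_zero]; ring
  exact le_of_mul_le_mul_right (hmono.trans hlip) (by positivity)

theorem norm_sub_smul_sq_le_of_two_inner_ge {L μ γ α : ℝ} {r v w : E} (hμ : 0 < μ)
    (hμL : μ ≤ L) (hkey : μ * ‖r‖ ^ 2 + ‖v‖ ^ 2 / L ≤ 2 * ⟪r, v⟫_ℝ)
    (hγ0 : 0 < γ) (hγ : γ < 1 / (2 * L)) (hα0 : 0 < α) (hα1 : α < 1) :
    ‖r - (γ * α) • w‖ ^ 2 ≤ (1 - μ * γ * α / 2) * ‖r‖ ^ 2 - γ ^ 2 * α / 4 * ‖w‖ ^ 2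
      + 4 * γ * α / μ * ‖v - w‖ ^ 2 := by
  have hL : 0 < L := hμ.trans_le hμL
  have hγL : 2 * L * γ < 1 := by rwa [lt_div_iff₀ (by positivity), mul_comm] at hγ
  have hexpand : ‖r - (γ * α) • w‖ ^ 2
      = ‖r‖ ^ 2 - 2 * (γ * α) * (⟪r, v⟫_ℝ - ⟪r, v - w⟫_ℝ) + (γ * α) ^ 2 * ‖w‖ ^ 2 := by
    rw [norm_sub_sq_real, inner_smul_right, inner_sub_right, norm_smul, mul_pow,
      Real.norm_eq_abs, sq_abs]
    ring
  have hyoung : 2 * ⟪r, v - w⟫_ℝ ≤ μ / 2 * ‖r‖ ^ 2 + 2 / μ * ‖v - w‖ ^ 2 := by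
    have hsq : (μ * ‖r‖ - 2 * ‖v - w‖) ^ 2 / (2 * μ)
        = μ / 2 * ‖r‖ ^ 2 + 2 / μ * ‖v - w‖ ^ 2 - 2 * (‖r‖ * ‖v - w‖) := by
      field_simp; ring
    have : 0 ≤ (μ * ‖r‖ - 2 * ‖v - w‖) ^ 2 / (2 * μ) := by positivity
    linarith [real_inner_le_norm r (v - w)]
  -- Young's inequality `(a + b)² ≤ (1 + t) a² + (1 + 1/t) b²` with `t = 3/5`
  have hmean : ‖w‖ ^ 2 ≤ 8 / 5 * ‖v‖ ^ 2 + 8 / 3 * ‖v - w‖ ^ 2 := by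
    have : ‖w‖ ≤ ‖v‖ + ‖v - w‖ := by simpa using norm_sub_le v (v - w)
    nlinarith [norm_nonneg w, sq_nonneg (3 * ‖v‖ - 5 * ‖v - w‖)]
  have hbudget : ((γ * α) ^ 2 + γ ^ 2 * α / 4) * ‖w‖ ^ 2
      ≤ γ * α * (‖v‖ ^ 2 / L) + 2 * γ * α / μ * ‖v - w‖ ^ 2 := by
    have hcoef : (γ * α) ^ 2 + γ ^ 2 * α / 4 ≤ 5 / 4 * (γ ^ 2 * α) := by nlinarith
    have hγv : 2 * γ * ‖v‖ ^ 2 ≤ ‖v‖ ^ 2 / L := by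
      rw [le_div_iff₀ hL]; nlinarith [sq_nonneg ‖v‖]
    have hγw : 10 / 3 * γ * ‖v - w‖ ^ 2 ≤ 2 / μ * ‖v - w‖ ^ 2 := by
      gcongr
      rw [le_div_iff₀ hμ]; nlinarith
    calc ((γ * α) ^ 2 + γ ^ 2 * α / 4) * ‖w‖ ^ 2 ≤ 5 / 4 * (γ ^ 2 * α) * ‖w‖ ^ 2 := by gcongr
      _ ≤ 5 / 4 * (γ ^ 2 * α) * (8 / 5 * ‖v‖ ^ 2 + 8 / 3 * ‖v - w‖ ^ 2) := by gcongr
      _ = γ * α * (2 * γ * ‖v‖ ^ 2) + γ * α * (10 / 3 * γ * ‖v - w‖ ^ 2) := by ring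
      _ ≤ γ * α * (‖v‖ ^ 2 / L) + γ * α * (2 / μ * ‖v - w‖ ^ 2) := by gcongr
      _ = γ * α * (‖v‖ ^ 2 / L) + 2 * γ * α / μ * ‖v - w‖ ^ 2 := by ring
  have hγα : 0 ≤ γ * α := by positivity
  rw [hexpand]
  linear_combination mul_le_mul_of_nonneg_left hkey hγα + mul_le_mul_of_nonneg_left hyoung hγα
    + hbudget

theorem integral_norm_sub_smul_sq [CompleteSpace E] {Ω : Type*} [MeasurableSpace Ω]
    {P : Measure Ω} [IsProbabilityMeasure P] {w : Ω → E} (hw : Integrable w P)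
    (hw2 : Integrable (fun ω => ‖w ω - ∫ ω', w ω' ∂P‖ ^ 2) P) (x : E) (c : ℝ) :
    ∫ ω, ‖x - c • w ω‖ ^ 2 ∂P
      = ‖x - c • ∫ ω, w ω ∂P‖ ^ 2 + c ^ 2 * ∫ ω, ‖w ω - ∫ ω', w ω' ∂P‖ ^ 2 ∂P := by
  set m := ∫ ω, w ω ∂P
  have hcentered : Integrable (fun ω => w ω - m) P := hw.sub (integrable_const m)
  have hmean_zero : ∫ ω, (w ω - m) ∂P = 0 := by
    rw [integral_sub hw (integrable_const m), integral_const, probReal_univ, one_smul, sub_self]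
  have hpointwise : ∀ ω, ‖x - c • w ω‖ ^ 2
      = ‖x - c • m‖ ^ 2 - 2 * c * ⟪x - c • m, w ω - m⟫_ℝ + c ^ 2 * ‖w ω - m‖ ^ 2 := by
    intro ω
    rw [show x - c • w ω = (x - c • m) - c • (w ω - m) by module, norm_sub_sq_real,
      inner_smul_right, norm_smul, mul_pow, Real.norm_eq_abs, sq_abs]
    ring
  have hinner : Integrable (fun ω => 2 * c * ⟪x - c • m, w ω - m⟫_ℝ) P :=
    (hcentered.const_inner _).const_mul _
  simp_rw [hpointwise]
  rw [integral_add (f := fun ω => ‖x - c • m‖ ^ 2 - 2 * c * ⟪x - c • m, w ω - m⟫_ℝ)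
      ((integrable_const _).sub hinner) (hw2.const_mul _),
    integral_sub (integrable_const _) hinner, integral_const_mul, integral_const_mul,
    integral_inner hcentered, hmean_zero]
  simp

end

/-- One damped stochastic step `y_{t+1} = y_t - γ α w` with a (possibly biased) random
direction `w`, on an `L`-smooth, `μ`-strongly convex function `g` with minimizer `y*`,
`γ < 1/(2L)` and `0 < α < 1`:
`𝔼‖y_{t+1} - y*‖² ≤ (1 - μγα/2)‖y_t - y*‖² - (γ²α/4)‖𝔼[w]‖²
  + (4γα/μ)‖∇g(y_t) - 𝔼[w]‖² + (3γ²α/2) Var[w]`. -/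
theorem biased_sgd_one_step_bound {d : ℕ} {Ω : Type*} [MeasurableSpace Ω]
    (P : Measure Ω) [IsProbabilityMeasure P]
    (g : EuclideanSpace ℝ (Fin d) → ℝ)
    (G : EuclideanSpace ℝ (Fin d) → EuclideanSpace ℝ (Fin d))
    (L μ γ α : ℝ) (hL : 0 < L) (hμ : 0 < μ)
    (hgrad : ∀ y, HasGradientAt g (G y) y)
    (hsc : ∀ y1 y2, g y2 + ⟪G y2, y1 - y2⟫_ℝ + μ / 2 * ‖y1 - y2‖ ^ 2 ≤ g y1)
    (hsm : ∀ y1 y2, ‖G y1 - G y2‖ ≤ L * ‖y1 - y2‖)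
    (ystar : EuclideanSpace ℝ (Fin d)) (hmin : ∀ y, g ystar ≤ g y)
    (yt : EuclideanSpace ℝ (Fin d)) (w : Ω → EuclideanSpace ℝ (Fin d))
    (hw : Integrable w P)
    (wbar : EuclideanSpace ℝ (Fin d)) (hwbar : wbar = ∫ ω, w ω ∂P)
    (V : ℝ) (hV : V = ∫ ω, ‖w ω - wbar‖ ^ 2 ∂P)
    (hw2 : Integrable (fun ω => ‖w ω - wbar‖ ^ 2) P)
    (hγ0 : 0 < γ) (hγ : γ < 1 / (2 * L)) (hα0 : 0 < α) (hα1 : α < 1) :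
    ∫ ω, ‖yt - (γ * α) • w ω - ystar‖ ^ 2 ∂P
      ≤ (1 - μ * γ * α / 2) * ‖yt - ystar‖ ^ 2 - γ ^ 2 * α / 4 * ‖wbar‖ ^ 2
        + 4 * γ * α / μ * ‖G yt - wbar‖ ^ 2 + 3 * γ ^ 2 * α / 2 * V := by
  have hbias_variance : ∫ ω, ‖yt - (γ * α) • w ω - ystar‖ ^ 2 ∂P
      = ‖yt - ystar - (γ * α) • wbar‖ ^ 2 + (γ * α) ^ 2 * V := by
    subst hwbar hV
    simp_rw [sub_right_comm yt _ ystar]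
    exact integral_norm_sub_smul_sq hw hw2 _ _
  have hmean_step : ‖yt - ystar - (γ * α) • wbar‖ ^ 2 ≤ (1 - μ * γ * α / 2) * ‖yt - ystar‖ ^ 2
      - γ ^ 2 * α / 4 * ‖wbar‖ ^ 2 + 4 * γ * α / μ * ‖G yt - wbar‖ ^ 2 := by
    rcases subsingleton_or_nontrivial (EuclideanSpace ℝ (Fin d)) with hE | hE
    · simp [Subsingleton.elim _ (0 : EuclideanSpace ℝ (Fin d))]
    · exact norm_sub_smul_sq_le_of_two_inner_ge hμ
        (le_of_strongConvex_of_lipschitz_gradient hsc hsm)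
        (mul_sq_add_sq_div_le_two_inner_of_isMin hL hgrad hsc hsm hmin yt) hγ0 hγ hα0 hα1
  have hV0 : 0 ≤ V := hV ▸ integral_nonneg fun ω => by positivity
  have hvariance : (γ * α) ^ 2 * V ≤ 3 * γ ^ 2 * α / 2 * V := by
    gcongr
    nlinarith [mul_pos (pow_pos hγ0 2) hα0]
  linarith
end

section
/- Let $\Phi(x,y) = \nabla_x f(x,y) - \nabla_{xy} g(x,y)\,[\nabla_{y^2} g(x,y)]^{-1}\nabla_y f(x,y)$ where $f$ is $L$-smooth with $C_f$-bounded gradient, $g$ is $\mu$-strongly convex in $y$ and $L$-smooth, and $\nabla_{xy} g$ and $\nabla_{y^2} g$ are Lipschitz with constants $L_{xy}$ and $L_{y^2}$. Then $\Phi$ is Lipschitz: there exists a constant $\hat{L} = O(\kappa^2)$ (with $\kappa = L/\mu$) such that $\|\Phi(x_1, y_1) - \Phi(x_2, y_2)\|^2 \le \hat{L}^2(\|x_1 - x_2\|^2 + \|y_1 - y_2\|^2)$ for all $(x_1,y_1), (x_2,y_2)$. -/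
private lemma sq_le_to_le' {a c D : ℝ} (ha : 0 ≤ a) (h : a ^ 2 ≤ c ^ 2 * D) :
    a ≤ |c| * Real.sqrt D := by
  have h1 : a = Real.sqrt (a ^ 2) := (Real.sqrt_sq ha).symm
  rw [h1]
  calc Real.sqrt (a ^ 2) ≤ Real.sqrt (c ^ 2 * D) := Real.sqrt_le_sqrt h
    _ = |c| * Real.sqrt D := by
        rw [Real.sqrt_mul (sq_nonneg c), Real.sqrt_sq_eq_abs]

/-- Lipschitz continuity of the implicit-differentiation hypergradient map
`Φ(x,y) = ∇ₓf(x,y) - ∇ₓᵧg(x,y)[∇ᵧ²g(x,y)]⁻¹∇ᵧf(x,y)`: under `L`-smoothness of `f`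
with `C_f`-bounded gradient, `μ`-strong convexity of `g` in `y`, `L`-smoothness of `g`,
and Lipschitz second derivatives (`L_{xy}`, `L_{y²}`), there is a constant `L̂`
(of order `κ² = (L/μ)²`) with `‖Φ(x₁,y₁) - Φ(x₂,y₂)‖² ≤ L̂²(‖x₁-x₂‖² + ‖y₁-y₂‖²)`. -/
theorem hypergradient_map_lipschitz {X Y : Type*}
    [NormedAddCommGroup X] [InnerProductSpace ℝ X]
    [NormedAddCommGroup Y] [InnerProductSpace ℝ Y]
    (L μ Cf Lxy Ly2 : ℝ) (hL : 0 < L) (hμ : 0 < μ) (hCf : 0 < Cf)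
    (Gxf : X → Y → X) (Gyf : X → Y → Y)
    (Gxy : X → Y → (Y →L[ℝ] X)) (Gyy Hinv : X → Y → (Y →L[ℝ] Y))
    -- `f` is `L`-smooth with `C_f`-bounded gradient
    (hfx_lip : ∀ x1 y1 x2 y2,
      ‖Gxf x1 y1 - Gxf x2 y2‖ ^ 2 ≤ L ^ 2 * (‖x1 - x2‖ ^ 2 + ‖y1 - y2‖ ^ 2))
    (hfy_lip : ∀ x1 y1 x2 y2,
      ‖Gyf x1 y1 - Gyf x2 y2‖ ^ 2 ≤ L ^ 2 * (‖x1 - x2‖ ^ 2 + ‖y1 - y2‖ ^ 2))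
    (hfx_bd : ∀ x y, ‖Gxf x y‖ ≤ Cf) (hfy_bd : ∀ x y, ‖Gyf x y‖ ≤ Cf)
    -- `g` is `L`-smooth, so `‖∇ₓᵧ g‖ ≤ L`
    (hgxy_bd : ∀ x y, ‖Gxy x y‖ ≤ L)
    -- Lipschitz second derivatives of `g`
    (hgxy_lip : ∀ x1 y1 x2 y2,
      ‖Gxy x1 y1 - Gxy x2 y2‖ ^ 2 ≤ Lxy ^ 2 * (‖x1 - x2‖ ^ 2 + ‖y1 - y2‖ ^ 2))
    (hgyy_lip : ∀ x1 y1 x2 y2,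
      ‖Gyy x1 y1 - Gyy x2 y2‖ ^ 2 ≤ Ly2 ^ 2 * (‖x1 - x2‖ ^ 2 + ‖y1 - y2‖ ^ 2))
    -- `μ`-strong convexity of `g` in `y`: the Hessian is invertible with `‖(∇ᵧ²g)⁻¹‖ ≤ 1/μ`
    (hinv1 : ∀ x y, (Gyy x y).comp (Hinv x y) = ContinuousLinearMap.id ℝ Y)
    (hinv2 : ∀ x y, (Hinv x y).comp (Gyy x y) = ContinuousLinearMap.id ℝ Y)
    (hHbd : ∀ x y, ‖Hinv x y‖ ≤ 1 / μ) :
    ∃ Lhat : ℝ, 0 ≤ Lhat ∧ ∀ x1 y1 x2 y2,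
      ‖(Gxf x1 y1 - Gxy x1 y1 (Hinv x1 y1 (Gyf x1 y1))) -
        (Gxf x2 y2 - Gxy x2 y2 (Hinv x2 y2 (Gyf x2 y2)))‖ ^ 2
        ≤ Lhat ^ 2 * (‖x1 - x2‖ ^ 2 + ‖y1 - y2‖ ^ 2) := by
  set Lhat : ℝ := L + (|Lxy| * (1 / μ * Cf) + L * (1 / μ * |Ly2| * (1 / μ) * Cf)
      + L * (1 / μ * L)) with hLhat
  have hLhat0 : 0 ≤ Lhat := by positivity
  refine ⟨Lhat, hLhat0, fun x1 y1 x2 y2 => ?_⟩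
  set D : ℝ := ‖x1 - x2‖ ^ 2 + ‖y1 - y2‖ ^ 2 with hDdef
  have hD : 0 ≤ D := by positivity
  set s : ℝ := Real.sqrt D with hsdef
  have hs : 0 ≤ s := Real.sqrt_nonneg D
  have hs2 : s ^ 2 = D := Real.sq_sqrt hD
  -- component Lipschitz bounds
  have h1 : ‖Gxf x1 y1 - Gxf x2 y2‖ ≤ |L| * s :=
    sq_le_to_le' (norm_nonneg _) (hfx_lip x1 y1 x2 y2)
  have h2 : ‖Gyf x1 y1 - Gyf x2 y2‖ ≤ |L| * s :=
    sq_le_to_le' (norm_nonneg _) (hfy_lip x1 y1 x2 y2)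
  have h3 : ‖Gxy x1 y1 - Gxy x2 y2‖ ≤ |Lxy| * s :=
    sq_le_to_le' (norm_nonneg _) (hgxy_lip x1 y1 x2 y2)
  have h4 : ‖Gyy x2 y2 - Gyy x1 y1‖ ≤ |Ly2| * s := by
    rw [norm_sub_rev]
    exact sq_le_to_le' (norm_nonneg _) (hgyy_lip x1 y1 x2 y2)
  have habsL : |L| = L := abs_of_pos hL
  rw [habsL] at h1 h2
  -- Lipschitz bound for Hinv
  have hkey : Hinv x1 y1 - Hinv x2 y2 =
      (Hinv x1 y1).comp ((Gyy x2 y2 - Gyy x1 y1).comp (Hinv x2 y2)) := by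
    have e1 : Gyy x2 y2 * Hinv x2 y2 = 1 := hinv1 x2 y2
    have e2 : Hinv x1 y1 * Gyy x1 y1 = 1 := hinv2 x1 y1
    show Hinv x1 y1 - Hinv x2 y2 = Hinv x1 y1 * ((Gyy x2 y2 - Gyy x1 y1) * Hinv x2 y2)
    rw [sub_mul, mul_sub, ← mul_assoc (Hinv x1 y1) (Gyy x2 y2), mul_assoc,
      e1, mul_one, ← mul_assoc, e2, one_mul]
  have hHlip : ‖Hinv x1 y1 - Hinv x2 y2‖ ≤ 1 / μ * (|Ly2| * s) * (1 / μ) := by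
    rw [hkey]
    calc ‖(Hinv x1 y1).comp ((Gyy x2 y2 - Gyy x1 y1).comp (Hinv x2 y2))‖
        ≤ ‖Hinv x1 y1‖ * (‖Gyy x2 y2 - Gyy x1 y1‖ * ‖Hinv x2 y2‖) := by
          refine (ContinuousLinearMap.opNorm_comp_le _ _).trans ?_
          exact mul_le_mul_of_nonneg_left
            (ContinuousLinearMap.opNorm_comp_le _ _) (norm_nonneg _)
      _ ≤ 1 / μ * ((|Ly2| * s) * (1 / μ)) := by
          have hμ' : (0:ℝ) ≤ 1 / μ := by positivity
          gcongr
          · exact hHbd x1 y1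
          · exact hHbd x2 y2
      _ = 1 / μ * (|Ly2| * s) * (1 / μ) := by ring
  -- telescoping decomposition of the second term
  have hdec : Gxy x1 y1 (Hinv x1 y1 (Gyf x1 y1)) - Gxy x2 y2 (Hinv x2 y2 (Gyf x2 y2)) =
      (Gxy x1 y1 - Gxy x2 y2) (Hinv x1 y1 (Gyf x1 y1))
      + Gxy x2 y2 ((Hinv x1 y1 - Hinv x2 y2) (Gyf x1 y1))
      + Gxy x2 y2 (Hinv x2 y2 (Gyf x1 y1 - Gyf x2 y2)) := by
    simp only [ContinuousLinearMap.sub_apply, map_sub]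
    abel
  have hv : ‖Hinv x1 y1 (Gyf x1 y1)‖ ≤ 1 / μ * Cf := by
    calc ‖Hinv x1 y1 (Gyf x1 y1)‖ ≤ ‖Hinv x1 y1‖ * ‖Gyf x1 y1‖ :=
          (Hinv x1 y1).le_opNorm _
      _ ≤ 1 / μ * Cf := by
          have := hHbd x1 y1
          have := hfy_bd x1 y1
          gcongr
  have hA : ‖Gxy x1 y1 (Hinv x1 y1 (Gyf x1 y1)) - Gxy x2 y2 (Hinv x2 y2 (Gyf x2 y2))‖
      ≤ (|Lxy| * (1 / μ * Cf) + L * (1 / μ * |Ly2| * (1 / μ) * Cf) + L * (1 / μ * L)) * s := by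
    rw [hdec]
    have t1 : ‖(Gxy x1 y1 - Gxy x2 y2) (Hinv x1 y1 (Gyf x1 y1))‖
        ≤ (|Lxy| * s) * (1 / μ * Cf) := by
      calc ‖(Gxy x1 y1 - Gxy x2 y2) (Hinv x1 y1 (Gyf x1 y1))‖
          ≤ ‖Gxy x1 y1 - Gxy x2 y2‖ * ‖Hinv x1 y1 (Gyf x1 y1)‖ :=
            (Gxy x1 y1 - Gxy x2 y2).le_opNorm _
        _ ≤ (|Lxy| * s) * (1 / μ * Cf) := by
            gcongr <;> first | positivity | exact h3 | exact hv
    have t2 : ‖Gxy x2 y2 ((Hinv x1 y1 - Hinv x2 y2) (Gyf x1 y1))‖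
        ≤ L * (1 / μ * (|Ly2| * s) * (1 / μ) * Cf) := by
      calc ‖Gxy x2 y2 ((Hinv x1 y1 - Hinv x2 y2) (Gyf x1 y1))‖
          ≤ ‖Gxy x2 y2‖ * ‖(Hinv x1 y1 - Hinv x2 y2) (Gyf x1 y1)‖ :=
            (Gxy x2 y2).le_opNorm _
        _ ≤ ‖Gxy x2 y2‖ * (‖Hinv x1 y1 - Hinv x2 y2‖ * ‖Gyf x1 y1‖) := by
            exact mul_le_mul_of_nonneg_left ((Hinv x1 y1 - Hinv x2 y2).le_opNorm _)
              (norm_nonneg _)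
        _ ≤ L * (1 / μ * (|Ly2| * s) * (1 / μ) * Cf) := by
            have hb := hgxy_bd x2 y2
            have hc := hfy_bd x1 y1
            calc ‖Gxy x2 y2‖ * (‖Hinv x1 y1 - Hinv x2 y2‖ * ‖Gyf x1 y1‖)
                ≤ L * ((1 / μ * (|Ly2| * s) * (1 / μ)) * Cf) := by
                  gcongr <;> first
                    | positivity | exact hb | exact hHlip | exact hc
                    | exact (norm_nonneg _).trans hb
              _ = L * (1 / μ * (|Ly2| * s) * (1 / μ) * Cf) := by ring
    have t3 : ‖Gxy x2 y2 (Hinv x2 y2 (Gyf x1 y1 - Gyf x2 y2))‖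
        ≤ L * (1 / μ * (L * s)) := by
      calc ‖Gxy x2 y2 (Hinv x2 y2 (Gyf x1 y1 - Gyf x2 y2))‖
          ≤ ‖Gxy x2 y2‖ * (‖Hinv x2 y2‖ * ‖Gyf x1 y1 - Gyf x2 y2‖) := by
            refine ((Gxy x2 y2).le_opNorm _).trans ?_
            exact mul_le_mul_of_nonneg_left ((Hinv x2 y2).le_opNorm _) (norm_nonneg _)
        _ ≤ L * (1 / μ * (L * s)) := by
            have hb := hgxy_bd x2 y2
            gcongr <;> first
              | positivity | exact hb | exact hHbd x2 y2 | exact h2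
              | exact (norm_nonneg _).trans hb
    calc ‖_ + _ + _‖ ≤ ‖(Gxy x1 y1 - Gxy x2 y2) (Hinv x1 y1 (Gyf x1 y1))
          + Gxy x2 y2 ((Hinv x1 y1 - Hinv x2 y2) (Gyf x1 y1))‖
          + ‖Gxy x2 y2 (Hinv x2 y2 (Gyf x1 y1 - Gyf x2 y2))‖ := norm_add_le _ _
      _ ≤ ‖(Gxy x1 y1 - Gxy x2 y2) (Hinv x1 y1 (Gyf x1 y1))‖
          + ‖Gxy x2 y2 ((Hinv x1 y1 - Hinv x2 y2) (Gyf x1 y1))‖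
          + ‖Gxy x2 y2 (Hinv x2 y2 (Gyf x1 y1 - Gyf x2 y2))‖ := by
            gcongr; exact norm_add_le _ _
      _ ≤ (|Lxy| * s) * (1 / μ * Cf) + L * (1 / μ * (|Ly2| * s) * (1 / μ) * Cf)
          + L * (1 / μ * (L * s)) := by gcongr
      _ = (|Lxy| * (1 / μ * Cf) + L * (1 / μ * |Ly2| * (1 / μ) * Cf) + L * (1 / μ * L)) * s := by
            ring
  -- combine
  have hfinal : ‖(Gxf x1 y1 - Gxy x1 y1 (Hinv x1 y1 (Gyf x1 y1))) -
      (Gxf x2 y2 - Gxy x2 y2 (Hinv x2 y2 (Gyf x2 y2)))‖ ≤ Lhat * s := by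
    have hrw : (Gxf x1 y1 - Gxy x1 y1 (Hinv x1 y1 (Gyf x1 y1))) -
        (Gxf x2 y2 - Gxy x2 y2 (Hinv x2 y2 (Gyf x2 y2)))
        = (Gxf x1 y1 - Gxf x2 y2)
          - (Gxy x1 y1 (Hinv x1 y1 (Gyf x1 y1)) - Gxy x2 y2 (Hinv x2 y2 (Gyf x2 y2))) := by
      abel
    rw [hrw, hLhat]
    calc ‖_ - _‖ ≤ ‖Gxf x1 y1 - Gxf x2 y2‖
          + ‖Gxy x1 y1 (Hinv x1 y1 (Gyf x1 y1)) - Gxy x2 y2 (Hinv x2 y2 (Gyf x2 y2))‖ :=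
            norm_sub_le _ _
      _ ≤ L * s + (|Lxy| * (1 / μ * Cf) + L * (1 / μ * |Ly2| * (1 / μ) * Cf)
          + L * (1 / μ * L)) * s := add_le_add h1 hA
      _ = (L + (|Lxy| * (1 / μ * Cf) + L * (1 / μ * |Ly2| * (1 / μ) * Cf)
          + L * (1 / μ * L))) * s := by ring
  calc ‖(Gxf x1 y1 - Gxy x1 y1 (Hinv x1 y1 (Gyf x1 y1))) -
        (Gxf x2 y2 - Gxy x2 y2 (Hinv x2 y2 (Gyf x2 y2)))‖ ^ 2
      ≤ (Lhat * s) ^ 2 := by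
        have := norm_nonneg ((Gxf x1 y1 - Gxy x1 y1 (Hinv x1 y1 (Gyf x1 y1))) -
          (Gxf x2 y2 - Gxy x2 y2 (Hinv x2 y2 (Gyf x2 y2))))
        nlinarith [hfinal]
    _ = Lhat ^ 2 * D := by rw [mul_pow, hs2]
end

section
/- Under the assumptions of non-convex-strongly-convex bilevel optimization (Assumptions 1–3 of the paper), the hyper-objective $h(x) = f(x, y_x)$ with $y_x = \arg\min_y g(x,y)$ has Lipschitz gradient: there exists $\bar{L} = O(\kappa^3)$ with $\kappa = L/\mu$ such that $\|\nabla h(x_1) - \nabla h(x_2)\| \le \bar{L}\|x_1 - x_2\|$ for all $x_1, x_2$. -/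
open scoped InnerProductSpace

private lemma sqrt_bound {v C κ a b : ℝ} (hv : 0 ≤ v) (ha : 0 ≤ a) (hb : 0 ≤ b)
    (hκ : 0 ≤ κ) (hba : b ≤ κ * a)
    (h : v ^ 2 ≤ C ^ 2 * (a ^ 2 + b ^ 2)) :
    v ≤ |C| * Real.sqrt (1 + κ ^ 2) * a := by
  have hD : 0 ≤ Real.sqrt (1 + κ ^ 2) := Real.sqrt_nonneg _
  have hD2 : Real.sqrt (1 + κ ^ 2) ^ 2 = 1 + κ ^ 2 := Real.sq_sqrt (by positivity)
  have hC2 : |C| ^ 2 = C ^ 2 := sq_abs C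
  set w := |C| * Real.sqrt (1 + κ ^ 2) * a with hw
  have hwnn : 0 ≤ w := by positivity
  have hbb : b ^ 2 ≤ κ ^ 2 * a ^ 2 := by nlinarith
  have hw2 : w ^ 2 = C ^ 2 * ((1 + κ ^ 2) * a ^ 2) := by
    rw [hw, mul_pow, mul_pow, hC2, hD2]; ring
  have hvw : v ^ 2 ≤ w ^ 2 := by nlinarith [sq_nonneg C]
  calc v = Real.sqrt (v ^ 2) := (Real.sqrt_sq hv).symm
    _ ≤ Real.sqrt (w ^ 2) := Real.sqrt_le_sqrt hvw
    _ = w := Real.sqrt_sq hwnn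
/-- Smoothness of the hyper-objective `h(x) = f(x, y_x)` with
`y_x = argmin_y g(x,y)`, under the non-convex–strongly-convex bilevel assumptions:
there exists `L̄` (of order `κ³`) such that
`‖∇h(x₁) - ∇h(x₂)‖ ≤ L̄ ‖x₁ - x₂‖`, where
`∇h(x) = ∇ₓf(x,y_x) - ∇ₓᵧg(x,y_x)[∇ᵧ²g(x,y_x)]⁻¹∇ᵧf(x,y_x)`. -/
theorem hyperobjective_gradient_lipschitz {X Y : Type*}
    [NormedAddCommGroup X] [InnerProductSpace ℝ X]
    [NormedAddCommGroup Y] [InnerProductSpace ℝ Y]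
    (L μ Cf Lxy Ly2 : ℝ) (hL : 0 < L) (hμ : 0 < μ) (hCf : 0 < Cf)
    (g : X → Y → ℝ) (Gyg : X → Y → Y)
    (Gxf : X → Y → X) (Gyf : X → Y → Y)
    (Gxy : X → Y → (Y →L[ℝ] X)) (Gyy Hinv : X → Y → (Y →L[ℝ] Y))
    -- `g` is `μ`-strongly convex in `y` and `L`-smooth
    (hsc : ∀ x y1 y2,
      g x y2 + ⟪Gyg x y2, y1 - y2⟫_ℝ + μ / 2 * ‖y1 - y2‖ ^ 2 ≤ g x y1)
    (hgy_lipx : ∀ x1 x2 y, ‖Gyg x1 y - Gyg x2 y‖ ≤ L * ‖x1 - x2‖)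
    (hgy_lipy : ∀ x y1 y2, ‖Gyg x y1 - Gyg x y2‖ ≤ L * ‖y1 - y2‖)
    -- `f` is `L`-smooth with `C_f`-bounded gradient
    (hfx_lip : ∀ x1 y1 x2 y2,
      ‖Gxf x1 y1 - Gxf x2 y2‖ ^ 2 ≤ L ^ 2 * (‖x1 - x2‖ ^ 2 + ‖y1 - y2‖ ^ 2))
    (hfy_lip : ∀ x1 y1 x2 y2,
      ‖Gyf x1 y1 - Gyf x2 y2‖ ^ 2 ≤ L ^ 2 * (‖x1 - x2‖ ^ 2 + ‖y1 - y2‖ ^ 2))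
    (hfx_bd : ∀ x y, ‖Gxf x y‖ ≤ Cf) (hfy_bd : ∀ x y, ‖Gyf x y‖ ≤ Cf)
    (hgxy_bd : ∀ x y, ‖Gxy x y‖ ≤ L)
    -- Lipschitz second derivatives of `g`
    (hgxy_lip : ∀ x1 y1 x2 y2,
      ‖Gxy x1 y1 - Gxy x2 y2‖ ^ 2 ≤ Lxy ^ 2 * (‖x1 - x2‖ ^ 2 + ‖y1 - y2‖ ^ 2))
    (hgyy_lip : ∀ x1 y1 x2 y2,
      ‖Gyy x1 y1 - Gyy x2 y2‖ ^ 2 ≤ Ly2 ^ 2 * (‖x1 - x2‖ ^ 2 + ‖y1 - y2‖ ^ 2))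
    -- invertible Hessian with `‖(∇ᵧ²g)⁻¹‖ ≤ 1/μ`
    (hinv1 : ∀ x y, (Gyy x y).comp (Hinv x y) = ContinuousLinearMap.id ℝ Y)
    (hinv2 : ∀ x y, (Hinv x y).comp (Gyy x y) = ContinuousLinearMap.id ℝ Y)
    (hHbd : ∀ x y, ‖Hinv x y‖ ≤ 1 / μ)
    -- `y_x` is the minimizer of `g(x,·)`
    (yx : X → Y)
    (hmin : ∀ x y, g x (yx x) ≤ g x y)
    (hfoc : ∀ x, Gyg x (yx x) = 0) :
    ∃ Lbar : ℝ, 0 ≤ Lbar ∧ ∀ x1 x2,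
      ‖(Gxf x1 (yx x1) - Gxy x1 (yx x1) (Hinv x1 (yx x1) (Gyf x1 (yx x1)))) -
        (Gxf x2 (yx x2) - Gxy x2 (yx x2) (Hinv x2 (yx x2) (Gyf x2 (yx x2))))‖
        ≤ Lbar * ‖x1 - x2‖ := by
  set κ := L / μ with hκdef
  have hκ : 0 ≤ κ := by positivity
  set D := Real.sqrt (1 + κ ^ 2) with hDdef
  have hD : 0 ≤ D := Real.sqrt_nonneg _
  -- strong monotonicity of the gradient
  have hmono : ∀ x y1 y2, μ * ‖y1 - y2‖ ^ 2 ≤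
      ⟪Gyg x y1, y1 - y2⟫_ℝ - ⟪Gyg x y2, y1 - y2⟫_ℝ := by
    intro x y1 y2
    have h1 := hsc x y1 y2
    have h2 := hsc x y2 y1
    have e1 : ⟪Gyg x y1, y2 - y1⟫_ℝ = -⟪Gyg x y1, y1 - y2⟫_ℝ := by
      rw [show y2 - y1 = -(y1 - y2) by abel, inner_neg_right]
    have e2 : ‖y2 - y1‖ = ‖y1 - y2‖ := norm_sub_rev _ _
    rw [e1, e2] at h2
    linarith
  -- Lipschitzness of the argmin map
  have hyx_lip : ∀ x1 x2, ‖yx x1 - yx x2‖ ≤ κ * ‖x1 - x2‖ := by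
    intro x1 x2
    have h1 := hmono x2 (yx x1) (yx x2)
    rw [hfoc x2, inner_zero_left, sub_zero] at h1
    have h2 : ⟪Gyg x2 (yx x1), yx x1 - yx x2⟫_ℝ
        = ⟪Gyg x2 (yx x1) - Gyg x1 (yx x1), yx x1 - yx x2⟫_ℝ := by
      rw [inner_sub_left, hfoc x1, inner_zero_left, sub_zero]
    have h3 : ⟪Gyg x2 (yx x1) - Gyg x1 (yx x1), yx x1 - yx x2⟫_ℝ
        ≤ (L * ‖x1 - x2‖) * ‖yx x1 - yx x2‖ := by
      refine le_trans (real_inner_le_norm _ _) ?_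
      have := hgy_lipx x2 x1 (yx x1)
      rw [norm_sub_rev x2 x1] at this
      exact mul_le_mul_of_nonneg_right this (norm_nonneg _)
    rw [h2] at h1
    rcases eq_or_lt_of_le (norm_nonneg (yx x1 - yx x2)) with h0 | h0
    · rw [← h0]; positivity
    · rw [hκdef, div_mul_eq_mul_div, le_div_iff₀ hμ]
      nlinarith
  refine ⟨(|L| + Cf / μ * |Lxy| + L * Cf / μ ^ 2 * |Ly2| + L / μ * |L|) * D, by positivity, ?_⟩
  intro x1 x2
  set y1 := yx x1
  set y2 := yx x2
  have hδ : ‖y1 - y2‖ ≤ κ * ‖x1 - x2‖ := hyx_lip x1 x2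
  have b0 : ‖Gxf x1 y1 - Gxf x2 y2‖ ≤ |L| * D * ‖x1 - x2‖ :=
    sqrt_bound (norm_nonneg _) (norm_nonneg _) (norm_nonneg _) hκ hδ (hfx_lip x1 y1 x2 y2)
  have bA : ‖Gxy x1 y1 - Gxy x2 y2‖ ≤ |Lxy| * D * ‖x1 - x2‖ :=
    sqrt_bound (norm_nonneg _) (norm_nonneg _) (norm_nonneg _) hκ hδ (hgxy_lip x1 y1 x2 y2)
  have bG : ‖Gyy x2 y2 - Gyy x1 y1‖ ≤ |Ly2| * D * ‖x1 - x2‖ := by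
    rw [norm_sub_rev]
    exact sqrt_bound (norm_nonneg _) (norm_nonneg _) (norm_nonneg _) hκ hδ (hgyy_lip x1 y1 x2 y2)
  have bb : ‖Gyf x1 y1 - Gyf x2 y2‖ ≤ |L| * D * ‖x1 - x2‖ :=
    sqrt_bound (norm_nonneg _) (norm_nonneg _) (norm_nonneg _) hκ hδ (hfy_lip x1 y1 x2 y2)
  -- resolvent identity for the inverse Hessian
  have key : Hinv x1 y1 - Hinv x2 y2
      = (Hinv x1 y1).comp ((Gyy x2 y2 - Gyy x1 y1).comp (Hinv x2 y2)) := by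
    rw [ContinuousLinearMap.sub_comp, ContinuousLinearMap.comp_sub, hinv1,
      ContinuousLinearMap.comp_id, ← ContinuousLinearMap.comp_assoc, hinv2,
      ContinuousLinearMap.id_comp]
  have hH12 : ‖Hinv x1 y1 - Hinv x2 y2‖ ≤ (1 / μ) * ((|Ly2| * D * ‖x1 - x2‖) * (1 / μ)) := by
    rw [key]
    refine le_trans (ContinuousLinearMap.opNorm_comp_le _ _) ?_
    have h2 : ‖(Gyy x2 y2 - Gyy x1 y1).comp (Hinv x2 y2)‖
        ≤ (|Ly2| * D * ‖x1 - x2‖) * (1 / μ) := by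
      refine le_trans (ContinuousLinearMap.opNorm_comp_le _ _) ?_
      exact mul_le_mul bG (hHbd x2 y2) (norm_nonneg _) (by positivity)
    exact mul_le_mul (hHbd x1 y1) h2 (norm_nonneg _) (by positivity)
  have hb1 : ‖Hinv x1 y1 (Gyf x1 y1)‖ ≤ (1 / μ) * Cf := by
    refine le_trans (ContinuousLinearMap.le_opNorm _ _) ?_
    exact mul_le_mul (hHbd x1 y1) (hfy_bd x1 y1) (norm_nonneg _) (by positivity)
  have hT1 : ‖(Gxy x1 y1 - Gxy x2 y2) (Hinv x1 y1 (Gyf x1 y1))‖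
      ≤ (|Lxy| * D * ‖x1 - x2‖) * ((1 / μ) * Cf) := by
    refine le_trans (ContinuousLinearMap.le_opNorm _ _) ?_
    exact mul_le_mul bA hb1 (norm_nonneg _) (by positivity)
  have hT2 : ‖Gxy x2 y2 ((Hinv x1 y1 - Hinv x2 y2) (Gyf x1 y1))‖
      ≤ L * ((1 / μ) * ((|Ly2| * D * ‖x1 - x2‖) * (1 / μ)) * Cf) := by
    refine le_trans (ContinuousLinearMap.le_opNorm _ _) ?_
    refine mul_le_mul (hgxy_bd x2 y2) ?_ (norm_nonneg _) hL.le
    refine le_trans (ContinuousLinearMap.le_opNorm _ _) ?_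
    exact mul_le_mul hH12 (hfy_bd x1 y1) (norm_nonneg _) (by positivity)
  have hT3 : ‖Gxy x2 y2 (Hinv x2 y2 (Gyf x1 y1 - Gyf x2 y2))‖
      ≤ L * ((1 / μ) * (|L| * D * ‖x1 - x2‖)) := by
    refine le_trans (ContinuousLinearMap.le_opNorm _ _) ?_
    refine mul_le_mul (hgxy_bd x2 y2) ?_ (norm_nonneg _) hL.le
    refine le_trans (ContinuousLinearMap.le_opNorm _ _) ?_
    exact mul_le_mul (hHbd x2 y2) bb (norm_nonneg _) (by positivity)
  have decomp : (Gxf x1 y1 - Gxy x1 y1 (Hinv x1 y1 (Gyf x1 y1))) -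
      (Gxf x2 y2 - Gxy x2 y2 (Hinv x2 y2 (Gyf x2 y2)))
      = (Gxf x1 y1 - Gxf x2 y2)
        - (Gxy x1 y1 - Gxy x2 y2) (Hinv x1 y1 (Gyf x1 y1))
        - Gxy x2 y2 ((Hinv x1 y1 - Hinv x2 y2) (Gyf x1 y1))
        - Gxy x2 y2 (Hinv x2 y2 (Gyf x1 y1 - Gyf x2 y2)) := by
    simp only [ContinuousLinearMap.sub_apply, map_sub]
    abel
  rw [decomp]
  have tri : ‖(Gxf x1 y1 - Gxf x2 y2)
        - (Gxy x1 y1 - Gxy x2 y2) (Hinv x1 y1 (Gyf x1 y1))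
        - Gxy x2 y2 ((Hinv x1 y1 - Hinv x2 y2) (Gyf x1 y1))
        - Gxy x2 y2 (Hinv x2 y2 (Gyf x1 y1 - Gyf x2 y2))‖
      ≤ ‖Gxf x1 y1 - Gxf x2 y2‖
        + ‖(Gxy x1 y1 - Gxy x2 y2) (Hinv x1 y1 (Gyf x1 y1))‖
        + ‖Gxy x2 y2 ((Hinv x1 y1 - Hinv x2 y2) (Gyf x1 y1))‖
        + ‖Gxy x2 y2 (Hinv x2 y2 (Gyf x1 y1 - Gyf x2 y2))‖ := by
    calc _ ≤ ‖(Gxf x1 y1 - Gxf x2 y2)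
        - (Gxy x1 y1 - Gxy x2 y2) (Hinv x1 y1 (Gyf x1 y1))
        - Gxy x2 y2 ((Hinv x1 y1 - Hinv x2 y2) (Gyf x1 y1))‖
        + ‖Gxy x2 y2 (Hinv x2 y2 (Gyf x1 y1 - Gyf x2 y2))‖ := norm_sub_le _ _
      _ ≤ (‖(Gxf x1 y1 - Gxf x2 y2)
        - (Gxy x1 y1 - Gxy x2 y2) (Hinv x1 y1 (Gyf x1 y1))‖
        + ‖Gxy x2 y2 ((Hinv x1 y1 - Hinv x2 y2) (Gyf x1 y1))‖)
        + ‖Gxy x2 y2 (Hinv x2 y2 (Gyf x1 y1 - Gyf x2 y2))‖ := by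
          gcongr; exact norm_sub_le _ _
      _ ≤ ((‖Gxf x1 y1 - Gxf x2 y2‖
        + ‖(Gxy x1 y1 - Gxy x2 y2) (Hinv x1 y1 (Gyf x1 y1))‖)
        + ‖Gxy x2 y2 ((Hinv x1 y1 - Hinv x2 y2) (Gyf x1 y1))‖)
        + ‖Gxy x2 y2 (Hinv x2 y2 (Gyf x1 y1 - Gyf x2 y2))‖ := by
          gcongr; exact norm_sub_le _ _
      _ = _ := by ring
  have hsum : |L| * D * ‖x1 - x2‖
      + (|Lxy| * D * ‖x1 - x2‖) * ((1 / μ) * Cf)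
      + L * ((1 / μ) * ((|Ly2| * D * ‖x1 - x2‖) * (1 / μ)) * Cf)
      + L * ((1 / μ) * (|L| * D * ‖x1 - x2‖))
      = (|L| + Cf / μ * |Lxy| + L * Cf / μ ^ 2 * |Ly2| + L / μ * |L|) * D * ‖x1 - x2‖ := by
    field_simp
  linarith [tri, b0, hT1, hT2, hT3]
end

section
/- (Inner drift recursion) Let $g(x,\cdot)$ be $L$-smooth and $\mu$-strongly convex with minimizer $y_x$, and assume $y_x$ is $\kappa$-Lipschitz in $x$ with $\kappa = L/\mu$. Suppose $\bar{y}_{t+1}$ satisfies $\|\bar{y}_{t+1} - y_{\bar{x}_t}\|^2 \le (1 - \tfrac{\mu\gamma\alpha_t}{2})\|\bar{y}_t - y_{\bar{x}_t}\|^2 - \tfrac{\gamma^2\alpha_t}{4}\|\bar{\omega}_t\|^2 + \tfrac{4\gamma\alpha_t}{\mu}\|\nabla_y g(\bar{x}_t, \bar{y}_t) - \bar{\omega}_t\|^2$ and $\bar{x}_{t+1} = \bar{x}_t - \eta\alpha_t\bar{\nu}_t$, with $\gamma \le 1/(2L)$ and $\alpha_t < 1$. Then $\|\bar{y}_{t+1}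 - y_{\bar{x}_{t+1}}\|^2 \le (1 - \tfrac{\mu\gamma\alpha_t}{4})\|\bar{y}_t - y_{\bar{x}_t}\|^2 - \tfrac{\gamma^2\alpha_t}{4}\|\bar{\omega}_t\|^2 + \tfrac{9\kappa^2\eta^2\alpha_t}{2\mu\gamma}\|\bar{\nu}_t\|^2 + \tfrac{9\gamma\alpha_t}{2\mu}\|\nabla_y g(\bar{x}_t, \bar{y}_t) - \bar{\omega}_t\|^2$. -/
set_option maxHeartbeats 800000

lemma gen_tri {Y : Type*} [NormedAddCommGroup Y] (c : ℝ) (hc : 0 < c) (a b : Y) :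
    ‖a + b‖ ^ 2 ≤ (1 + c) * ‖a‖ ^ 2 + (1 + 1/c) * ‖b‖ ^ 2 := by
  have h := norm_add_le a b
  have h2 : ‖a + b‖ ^ 2 ≤ (‖a‖ + ‖b‖) ^ 2 := by
    apply sq_le_sq' <;> nlinarith [norm_nonneg a, norm_nonneg b, norm_nonneg (a + b)]
  have hcinv : c * (1/c) = 1 := mul_one_div_cancel hc.ne'
  nlinarith [sq_nonneg (c * ‖a‖ - ‖b‖), norm_nonneg a, norm_nonneg b, mul_pos hc hc,
    sq_nonneg ‖a‖, sq_nonneg ‖b‖]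

/-- Inner drift recursion: with `g(x,·)` `L`-smooth and `μ`-strongly convex,
solution map `y_x` being `κ`-Lipschitz (`κ = L/μ`), a one-step descent bound on
`‖ȳ_{t+1} - y_{x̄_t}‖²`, upper update `x̄_{t+1} = x̄_t - ηαₜ ν̄ₜ`, `γ ≤ 1/(2L)`,
`αₜ < 1`, one gets the contraction for `‖ȳ_{t+1} - y_{x̄_{t+1}}‖²`. -/
theorem inner_drift_recursion {X Y : Type*}
    [NormedAddCommGroup X] [InnerProductSpace ℝ X]
    [NormedAddCommGroup Y] [InnerProductSpace ℝ Y]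
    (L μ γ η αt : ℝ) (hμ : 0 < μ) (hμL : μ ≤ L)
    (hγ : 0 < γ) (hγL : γ ≤ 1 / (2 * L)) (hα0 : 0 < αt) (hα1 : αt < 1) (hη : 0 < η)
    (yx : X → Y) (hyx : ∀ x1 x2, ‖yx x1 - yx x2‖ ≤ L / μ * ‖x1 - x2‖)
    (xb xb' : X) (yb yb' : Y) (w gyt : Y) (ν : X)
    (hxupd : xb' = xb - (η * αt) • ν)
    (hdesc : ‖yb' - yx xb‖ ^ 2
      ≤ (1 - μ * γ * αt / 2) * ‖yb - yx xb‖ ^ 2 - γ ^ 2 * αt / 4 * ‖w‖ ^ 2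
        + 4 * γ * αt / μ * ‖gyt - w‖ ^ 2) :
    ‖yb' - yx xb'‖ ^ 2
      ≤ (1 - μ * γ * αt / 4) * ‖yb - yx xb‖ ^ 2 - γ ^ 2 * αt / 4 * ‖w‖ ^ 2
        + 9 * (L / μ) ^ 2 * η ^ 2 * αt / (2 * μ * γ) * ‖ν‖ ^ 2
        + 9 * γ * αt / (2 * μ) * ‖gyt - w‖ ^ 2 := by
  have hL : 0 < L := hμ.trans_le hμL
  -- Lipschitz bound, squared
  have hxdiff : xb - xb' = (η * αt) • ν := by rw [hxupd]; abel
  have hnx : ‖xb - xb'‖ = η * αt * ‖ν‖ := by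
    rw [hxdiff, norm_smul, Real.norm_of_nonneg (by positivity)]
  have hlip : ‖yx xb - yx xb'‖ ≤ L / μ * (η * αt * ‖ν‖) := by
    have := hyx xb xb'
    rwa [hnx] at this
  have hlipsq : ‖yx xb - yx xb'‖ ^ 2 ≤ (L / μ) ^ 2 * η ^ 2 * αt ^ 2 * ‖ν‖ ^ 2 := by
    have h0 : (0:ℝ) ≤ ‖yx xb - yx xb'‖ := norm_nonneg _
    have h1 : (0:ℝ) ≤ L / μ * (η * αt * ‖ν‖) := by positivity
    nlinarith
  -- triangle inequality
  set c : ℝ := μ * γ * αt / 4 with hc_def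
  have hc : 0 < c := by positivity
  have hsplit : yb' - yx xb' = (yb' - yx xb) + (yx xb - yx xb') := by abel
  have htri : ‖yb' - yx xb'‖ ^ 2
      ≤ (1 + c) * ‖yb' - yx xb‖ ^ 2 + (1 + 1/c) * ‖yx xb - yx xb'‖ ^ 2 := by
    rw [hsplit]; exact gen_tri c hc _ _
  clear_value c
  -- abstract the norm quantities
  set D := ‖yb - yx xb‖ ^ 2 with hD_def
  set W := ‖w‖ ^ 2 with hW_def
  set N := ‖gyt - w‖ ^ 2 with hN_def
  set V := ‖ν‖ ^ 2 with hV_def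
  set E := ‖yb' - yx xb‖ ^ 2 with hE_def
  set F := ‖yx xb - yx xb'‖ ^ 2 with hF_def
  have hD : 0 ≤ D := by rw [hD_def]; positivity
  have hW : 0 ≤ W := by rw [hW_def]; positivity
  have hN : 0 ≤ N := by rw [hN_def]; positivity
  have hV : 0 ≤ V := by rw [hV_def]; positivity
  have hF : 0 ≤ F := by rw [hF_def]; positivity
  clear_value D W N V E F
  clear hxdiff hnx hlip hsplit hD_def hW_def hN_def hV_def hE_def hF_def hxupd hyx
  -- smallness: μ γ αt ≤ 1/2
  have hγL' : γ * L ≤ 1 / 2 := by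
    have h := (le_div_iff₀ (by positivity : (0:ℝ) < 2 * L)).mp hγL
    nlinarith
  have hsmall : μ * γ * αt ≤ 1 / 2 := by nlinarith [mul_pos hμ hγ]
  have hc8 : c ≤ 1 / 8 := by rw [hc_def]; linarith
  have hcinv : c * (1/c) = 1 := mul_one_div_cancel hc.ne'
  -- key scalar bounds
  have h1 : (1 + c) * (1 - μ * γ * αt / 2) ≤ 1 - μ * γ * αt / 4 := by
    rw [hc_def]; nlinarith [mul_pos (mul_pos hμ hγ) hα0]
  have h3 : (1 + c) * (4 * γ * αt / μ) ≤ 9 * γ * αt / (2 * μ) := by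
    have e : (1 + c) * (4 * γ * αt / μ) = (1 + c) * (4 * γ * αt) / μ := by ring
    rw [e, div_le_div_iff₀ hμ (by positivity)]
    have h4 : 0 < γ * αt := by positivity
    nlinarith
  have hBig : (1 + 1/c) ≤ 9 / (8 * c) := by
    rw [le_div_iff₀ (by positivity : (0:ℝ) < 8 * c)]
    nlinarith
  -- term 1
  have hterm1 : (1 + c) * E
      ≤ (1 - μ * γ * αt / 4) * D - γ ^ 2 * αt / 4 * W + 9 * γ * αt / (2 * μ) * N := by
    have e0 : (1 + c) * E ≤ (1 + c) * ((1 - μ * γ * αt / 2) * D - γ ^ 2 * αt / 4 * W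
        + 4 * γ * αt / μ * N) := by
      apply mul_le_mul_of_nonneg_left hdesc (by positivity)
    have e1 := mul_le_mul_of_nonneg_right h1 hD
    have e3 := mul_le_mul_of_nonneg_right h3 hN
    have e2 : (1 + c) * (- (γ ^ 2 * αt / 4 * W)) ≤ - (γ ^ 2 * αt / 4 * W) := by
      have : 0 ≤ γ ^ 2 * αt / 4 * W := by positivity
      nlinarith
    nlinarith [e0, e1, e3, e2]
  -- term 2
  have hterm2 : (1 + 1/c) * F ≤ 9 * (L / μ) ^ 2 * η ^ 2 * αt / (2 * μ * γ) * V := by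
    have e1 : (1 + 1/c) * F ≤ 9 / (8 * c) * ((L / μ) ^ 2 * η ^ 2 * αt ^ 2 * V) := by
      calc (1 + 1/c) * F ≤ (1 + 1/c) * ((L / μ) ^ 2 * η ^ 2 * αt ^ 2 * V) :=
            mul_le_mul_of_nonneg_left hlipsq (by positivity)
        _ ≤ 9 / (8 * c) * ((L / μ) ^ 2 * η ^ 2 * αt ^ 2 * V) := by
            apply mul_le_mul_of_nonneg_right hBig (by positivity)
    have e2 : 9 / (8 * c) * ((L / μ) ^ 2 * η ^ 2 * αt ^ 2 * V)
        = 9 * (L / μ) ^ 2 * η ^ 2 * αt / (2 * μ * γ) * V := by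
      rw [hc_def]; field_simp; ring
    linarith [e2 ▸ e1]
  subst hc_def
  linarith [htri, hterm1, hterm2]
end
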